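/- Let N > 1 and let {a_j}_{j∈ℕ} be a discrete sequence without repetitions in ℂ^N that is contained in a proper algebraic subvariety of ℂ^N (the common zero set of a family of polynomials in N complex variables which is not all of ℂ^N). Then {a_j}_{j∈ℕ} is tame in ℂ^N. -/

import Mathlib

open Metric Set

/-- A holomorphic automorphism of ℂ^N: a bijection that is holomorphic with
holomorphic inverse. -/
def IsAutomorphism {N : ℕ} (Φ : (Fin N → ℂ) → (Fin N → ℂ)) : Prop :=
  Differentiable ℂ Φ ∧ ∃ Ψ : (Fin N → ℂ) → (Fin N → ℂ),
    Differentiable ℂ Ψ ∧ (∀ z, Ψ (Φ z) = z) ∧ (∀ w, Φ (Ψ w) = w)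

/-- A discrete sequence without repetitions in ℂ^N. -/
def DiscreteSeq {N : ℕ} (a : ℕ → (Fin N → ℂ)) : Prop :=
  Function.Injective a ∧
  ∀ K : Set (Fin N → ℂ), IsCompact K → {j : ℕ | a j ∈ K}.Finite

/-- A sequence in ℂ^N is tame if some holomorphic automorphism sends `a j`
to `e j = (j, 0, …, 0)` for every `j`. -/
def Tame {N : ℕ} (a : ℕ → (Fin N → ℂ)) : Prop :=
  ∃ Φ : (Fin N → ℂ) → (Fin N → ℂ), IsAutomorphism Φ ∧
    ∀ j : ℕ, Φ (a j) = fun i : Fin N => if (i : ℕ) = 0 then (j : ℂ) else 0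

/-- A closed complex subvariety of ℂ^N: locally the common zero set of a family
of holomorphic functions. -/
def IsClosedSubvariety {N : ℕ} (X : Set (Fin N → ℂ)) : Prop :=
  IsClosed X ∧ ∀ p : Fin N → ℂ, ∃ U : Set (Fin N → ℂ), IsOpen U ∧ p ∈ U ∧
    ∃ F : Set ((Fin N → ℂ) → ℂ), (∀ f ∈ F, DifferentiableOn ℂ f U) ∧
      X ∩ U = {z ∈ U | ∀ f ∈ F, f z = 0}

/-- Polynomial convexity: `K` equals its polynomial hull. -/
def PolyConvex {N : ℕ} (K : Set (Fin N → ℂ)) : Prop :=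
  K = {z : Fin N → ℂ | ∀ p : MvPolynomial (Fin N) ℂ,
    ‖MvPolynomial.eval z p‖ ≤ ⨆ w ∈ K, ‖MvPolynomial.eval w p‖}

/-- `Φ` is a biholomorphic map from the open set `Ω` onto all of ℂ^N. -/
def BiholoOnto {N : ℕ} (Ω : Set (Fin N → ℂ)) (Φ : (Fin N → ℂ) → (Fin N → ℂ)) : Prop :=
  DifferentiableOn ℂ Φ Ω ∧ ∃ Ψ : (Fin N → ℂ) → (Fin N → ℂ),
    Differentiable ℂ Ψ ∧ (∀ z ∈ Ω, Ψ (Φ z) = z) ∧ (∀ w, Ψ w ∈ Ω ∧ Φ (Ψ w) = w)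

/-!
After the polynomial shear `z ↦ (z₀, zᵢ + z₀ ^ M ^ i)` (Nagata's trick), a nonzero polynomial
vanishing on the sequence becomes monic in `z₀`. Hence, writing the points as `(βⱼ, wⱼ)`, the
`βⱼ` stay bounded while the `wⱼ` do, so the `wⱼ` form a discrete set. A shear
`z₀ ↦ z₀ + f (w)`, where the entire function `f` is large and generic on the `wⱼ`, makes the first
coordinates injective and discrete; shears built from interpolation at discrete sets of `ℂ` then
move the sequence to `(j, 0, …, 0)`. Entire interpolation at a discrete set of `ℂᵐ` is a
Mittag-Leffler series of products of affine functions.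
-/

theorem exists_injective_add_mul {ι : Type*} [Countable ι] {x κ : ι → ℂ}
    (h : ∀ i j, x i = x j → κ i = κ j → i = j) :
    ∃ t : ℂ, Function.Injective fun i => x i + t * κ i := by
  have hbad :
      (⋃ p : ι × ι, {t : ℂ | p.1 ≠ p.2 ∧ x p.1 + t * κ p.1 = x p.2 + t * κ p.2}).Countable := by
    refine countable_iUnion fun p => Subsingleton.countable fun t₁ ht₁ t₂ ht₂ => ?_
    have hκ : κ p.1 ≠ κ p.2 := fun hκ => ht₁.1 (h _ _ (by simpa [hκ] using ht₁.2) hκ)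
    have : (t₁ - t₂) * (κ p.1 - κ p.2) = 0 := by linear_combination ht₁.2 - ht₂.2
    exact sub_eq_zero.1 ((mul_eq_zero.1 this).resolve_right (sub_ne_zero.2 hκ))
  obtain ⟨t, ht⟩ : ∃ t : ℂ, t ∉ ⋃ p : ι × ι,
      {t : ℂ | p.1 ≠ p.2 ∧ x p.1 + t * κ p.1 = x p.2 + t * κ p.2} := by
    by_contra! hall
    exact not_countable_complex (hbad.mono fun t _ => hall t)
  exact ⟨t, fun i j hij => by_contra fun hne => ht (mem_iUnion.2 ⟨(i, j), hne, hij⟩)⟩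

section Holomorphic

variable {E F : Type*} [NormedAddCommGroup E] [NormedSpace ℂ E]
  [NormedAddCommGroup F] [NormedSpace ℂ F]

theorem norm_fderiv_le_of_forall_mem_closedBall_norm_le {u : E → F} (hu : Differentiable ℂ u)
    {z : E} {R C : ℝ} (hR : 0 < R) (hC : ∀ y ∈ closedBall z R, ‖u y‖ ≤ C) :
    ‖fderiv ℂ u z‖ ≤ C / R := by
  have hC0 : 0 ≤ C := (norm_nonneg _).trans (hC z (mem_closedBall_self hR.le))
  refine ContinuousLinearMap.opNorm_le_bound _ (div_nonneg hC0 hR.le) fun v => ?_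
  rcases eq_or_ne v 0 with rfl | hv
  · simp
  have hv' : 0 < ‖v‖ := norm_pos_iff.2 hv
  have hline : Differentiable ℂ fun t : ℂ => u (z + t • v) :=
    hu.comp ((differentiable_id.smul_const v).const_add z)
  have hderiv : deriv (fun t : ℂ => u (z + t • v)) 0 = fderiv ℂ u z v := by
    have hl : HasDerivAt (fun t : ℂ => z + t • v) v 0 := by
      simpa using ((hasDerivAt_id (0 : ℂ)).smul_const v).const_add z
    have := (hu (z + (0 : ℂ) • v)).hasFDerivAt.comp_hasDerivAt (0 : ℂ) hl
    simpa [Function.comp_def] using this.deriv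
  have hsphere : ∀ t ∈ sphere (0 : ℂ) (R / ‖v‖), ‖u (z + t • v)‖ ≤ C := fun t ht => by
    refine hC _ ?_
    rw [mem_sphere_zero_iff_norm] at ht
    rw [mem_closedBall, dist_self_add_left, norm_smul, ht, div_mul_cancel₀ _ hv'.ne']
  have := Complex.norm_deriv_le_of_forall_mem_sphere_norm_le (div_pos hR hv')
    hline.diffContOnCl hsphere
  rw [hderiv] at this
  calc ‖fderiv ℂ u z v‖ ≤ C / (R / ‖v‖) := this
    _ = C / R * ‖v‖ := by field_simp

/-- Locally, the Cauchy estimate turns the bound on the terms into a summable bound on their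
derivatives, once finitely many terms are split off. -/
theorem differentiable_tsum_of_eventually_norm_le [CompleteSpace F] {g : ℕ → E → F} {u : ℕ → ℝ}
    (hu : Summable u) (hg : ∀ n, Differentiable ℂ (g n))
    (hb : ∀ r, ∃ n₀, ∀ n ≥ n₀, ∀ z, ‖z‖ ≤ r → ‖g n z‖ ≤ u n) :
    Differentiable ℂ fun z => ∑' n, g n z := by
  intro x
  obtain ⟨n₀, hn₀⟩ := hb (‖x‖ + 2)
  have hsum : ∀ z, Summable fun n => g n z := fun z => by
    obtain ⟨n₁, hn₁⟩ := hb ‖z‖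
    exact Summable.of_norm_bounded_eventually_nat hu
      (Filter.eventually_atTop.2 ⟨n₁, fun n hn => hn₁ n hn z le_rfl⟩)
  have hsplit : (fun z => ∑' n, g n z) =
      fun z => ∑ n ∈ Finset.range n₀, g n z + ∑' n, g (n + n₀) z :=
    funext fun z => ((hsum z).sum_add_tsum_nat_add n₀).symm
  have hderiv : ∀ n, ∀ y ∈ ball (0 : E) (‖x‖ + 1), ‖fderiv ℂ (g (n + n₀)) y‖ ≤ u (n + n₀) :=
    fun n y hy => by
      have := norm_fderiv_le_of_forall_mem_closedBall_norm_le (hg (n + n₀)) (z := y) one_pos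
        fun z hz => hn₀ (n + n₀) (Nat.le_add_left _ _) z ?_
      · simpa using this
      rw [mem_closedBall, dist_eq_norm] at hz
      rw [mem_ball_zero_iff] at hy
      linarith [norm_le_norm_add_norm_sub' z y]
  have htail := hasFDerivAt_tsum_of_isPreconnected ((summable_nat_add_iff n₀).2 hu) isOpen_ball
    (convex_ball _ _).isPreconnected (fun n y _ => (hg (n + n₀) y).hasFDerivAt) hderiv
    (mem_ball_self (by positivity : (0 : ℝ) < ‖x‖ + 1)) ((summable_nat_add_iff n₀).2 (hsum 0))
    (by simp : x ∈ ball (0 : E) (‖x‖ + 1))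
  rw [hsplit]
  exact (Differentiable.fun_sum fun n _ => hg n).differentiableAt.add htail.differentiableAt

theorem exists_differentiable_eq_one_forall_eq_zero {p : E} {s : Finset E} (hp : p ∉ s) :
    ∃ P : E → ℂ, Differentiable ℂ P ∧ P p = 1 ∧ ∀ q ∈ s, P q = 0 := by
  have hdual : ∀ q : E, ∃ f : StrongDual ℂ E, q ≠ p → f (p - q) = 1 := fun q => by
    by_cases hq : q = p
    · exact ⟨0, fun h => absurd hq h⟩
    · obtain ⟨f, hf⟩ := SeparatingDual.exists_eq_one (R := ℂ) (sub_ne_zero.2 (Ne.symm hq))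
      exact ⟨f, fun _ => hf⟩
  choose f hf using hdual
  refine ⟨fun z => ∏ q ∈ s, f q (z - q), ?_, ?_, fun q hq => Finset.prod_eq_zero hq (by simp)⟩
  · classical
    exact fun x => (HasFDerivAt.finsetProd fun q _ =>
      ((f q).differentiable.comp (differentiable_id.sub_const q) x).hasFDerivAt).differentiableAt
  · exact Finset.prod_eq_one fun q hq => hf q (ne_of_mem_of_not_mem hq hp)

theorem exists_differentiable_eq_forall_eq_zero_norm_le [ProperSpace E] {p : E} {s : Finset E}
    (hp : p ∉ s) (c : F) {R ε : ℝ} (hR : R < ‖p‖) (hε : 0 < ε) :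
    ∃ h : E → F, Differentiable ℂ h ∧ h p = c ∧ (∀ q ∈ s, h q = 0) ∧
      ∀ z, ‖z‖ ≤ R → ‖h z‖ ≤ ε := by
  obtain ⟨P, hPd, hPp, hPs⟩ := exists_differentiable_eq_one_forall_eq_zero hp
  rcases lt_or_ge R 0 with hR0 | hR0
  · exact ⟨fun z => P z • c, hPd.smul_const c, by simp [hPp], fun q hq => by simp [hPs q hq],
      fun z hz => absurd ((norm_nonneg z).trans hz) hR0.not_ge⟩
  obtain ⟨K, hK⟩ := (isCompact_closedBall (0 : E) R).exists_bound_of_continuousOn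
    hPd.continuous.continuousOn
  have hK0 : 0 ≤ K := (norm_nonneg _).trans (hK 0 (mem_closedBall_self hR0))
  have hp0 : 0 < ‖p‖ := hR0.trans_lt hR
  obtain ⟨φ, hφ1, hφp⟩ := exists_dual_vector ℂ p hp0.ne'
  have hρ : R / ‖p‖ < 1 := (div_lt_one hp0).2 hR
  obtain ⟨M, hM⟩ := exists_pow_lt_of_lt_one (by positivity : 0 < ε / (K * ‖c‖ + 1)) hρ
  -- `P` has the prescribed zeros, and the power of `φ / ‖p‖` makes it small on the ball.
  refine ⟨fun z => (P z * (φ z / ‖p‖) ^ M) • c, by fun_prop, ?_, fun q hq => by simp [hPs q hq],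
    fun z hz => ?_⟩
  · have : (‖p‖ : ℂ) ≠ 0 := by exact_mod_cast hp0.ne'
    simp [hPp, hφp, this]
  have hφz : ‖φ z / ‖p‖‖ ≤ R / ‖p‖ := by
    rw [norm_div, Complex.norm_real, Real.norm_of_nonneg hp0.le]
    gcongr
    calc ‖φ z‖ ≤ ‖φ‖ * ‖z‖ := φ.le_opNorm z
      _ ≤ R := by rw [hφ1, one_mul]; exact hz
  calc ‖(P z * (φ z / ‖p‖) ^ M) • c‖ = ‖P z‖ * ‖φ z / ‖p‖‖ ^ M * ‖c‖ := by
        rw [norm_smul, norm_mul, norm_pow]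
    _ ≤ K * (R / ‖p‖) ^ M * ‖c‖ := by
        gcongr
        exact hK z (mem_closedBall_zero_iff.2 hz)
    _ ≤ (K * ‖c‖ + 1) * (R / ‖p‖) ^ M := by nlinarith [pow_nonneg (div_nonneg hR0 hp0.le) M]
    _ ≤ ε := by
        rw [lt_div_iff₀ (by positivity)] at hM
        linarith

/-- Mittag-Leffler type construction: the `n`-th correction corrects the value at `w n` without
changing the earlier values, and is at most `2⁻¹ ^ n` on the ball of radius `‖w n‖ - 1`. -/
theorem exists_differentiable_interpolation [ProperSpace E] [CompleteSpace F] {w : ℕ → E}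
    (hw : Function.Injective w) (hdisc : ∀ R, {j | ‖w j‖ ≤ R}.Finite) (v : ℕ → F) :
    ∃ f : E → F, Differentiable ℂ f ∧ ∀ j, f (w j) = v j := by
  have hbump : ∀ n (c : F), ∃ h : E → F, Differentiable ℂ h ∧ h (w n) = c ∧
      (∀ k < n, h (w k) = 0) ∧ ∀ z, ‖z‖ ≤ ‖w n‖ - 1 → ‖h z‖ ≤ (1 / 2) ^ n := fun n c => by
    classical
    have hp : w n ∉ (Finset.range n).image w := by
      simp only [Finset.mem_image, Finset.mem_range, not_exists, not_and]
      exact fun k hk h => (hw h ▸ hk).false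
    obtain ⟨h, hd, hp, hs, hsmall⟩ :=
      exists_differentiable_eq_forall_eq_zero_norm_le hp c (R := ‖w n‖ - 1)
        (ε := (1 / 2) ^ n) (by linarith) (by positivity)
    exact ⟨h, hd, hp, fun k hk => hs _ (Finset.mem_image_of_mem _ (Finset.mem_range.2 hk)),
      hsmall⟩
  choose h hd hval hzero hsmall using hbump
  let S : ℕ → E → F := fun n => Nat.rec 0 (fun n Sn => Sn + h n (v n - Sn (w n))) n
  let g : ℕ → E → F := fun n => h n (v n - S n (w n))
  have hS : ∀ n, S (n + 1) = S n + g n := fun n => rfl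
  have hSval : ∀ n, ∀ j < n, S n (w j) = v j := by
    intro n
    induction n with
    | zero => exact fun j hj => absurd hj (Nat.not_lt_zero j)
    | succ n ih =>
      intro j hj
      rcases Nat.lt_succ_iff_lt_or_eq.1 hj with hj | rfl
      · simp [hS, ih j hj, g, hzero n _ j hj]
      · simp [hS, g, hval]
  have hsum : ∀ n z, ∑ k ∈ Finset.range n, g k z = S n z := by
    intro n z
    induction n with
    | zero => rfl
    | succ n ih => rw [Finset.sum_range_succ, ih, hS, Pi.add_apply]
  refine ⟨fun z => ∑' n, g n z, differentiable_tsum_of_eventually_norm_le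
    summable_geometric_two (fun n => hd _ _) fun r => ?_, fun j => ?_⟩
  · obtain ⟨N, hN⟩ := (hdisc (r + 1)).bddAbove
    refine ⟨N + 1, fun n hn z hz => hsmall n _ z ?_⟩
    have : r + 1 < ‖w n‖ := by
      by_contra hc
      have := hN (not_lt.1 hc)
      omega
    linarith
  · simp only
    rw [tsum_eq_sum (s := Finset.range (j + 1)) fun n hn => hzero n _ j (by simp at hn; omega),
      hsum, hSval _ _ (Nat.lt_succ_self j)]

theorem exists_differentiable_eq_comp [ProperSpace E] [CompleteSpace F] {w : ℕ → E}
    (hdisc : ∀ R, {j | ‖w j‖ ≤ R}.Finite) (v : E → F) :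
    ∃ f : E → F, Differentiable ℂ f ∧ ∀ j, f (w j) = v (w j) := by
  have hinf : (range w).Infinite := fun hfin => by
    obtain ⟨R, hR⟩ := (hfin.image norm).bddAbove
    refine Set.infinite_univ ((hdisc R).subset fun j _ => ?_)
    exact hR ⟨w j, mem_range_self j, rfl⟩
  have := hinf.to_subtype
  have := (countable_range w).to_subtype
  obtain ⟨e⟩ := nonempty_equiv_of_countable (α := ℕ) (β := range w)
  have he : Function.Injective fun n => (e n : E) := Subtype.val_injective.comp e.injective
  have hedisc : ∀ R, {n | ‖(e n : E)‖ ≤ R}.Finite := fun R => by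
    refine (((hdisc R).image w).preimage he.injOn).subset fun n hn => ?_
    obtain ⟨j, hj⟩ := (e n).2
    exact ⟨j, show ‖w j‖ ≤ R by rwa [hj], hj⟩
  obtain ⟨f, hf, hfv⟩ := exists_differentiable_interpolation he hedisc fun n => v (e n)
  refine ⟨f, hf, fun j => ?_⟩
  obtain ⟨n, hn⟩ := e.surjective ⟨w j, mem_range_self j⟩
  simpa [hn] using hfv n

/-- The values of `f` on the points `w j` are chosen to exceed `B (w j) + ‖w j‖`, which pushes
`β j + f (w j)` to infinity, and are perturbed by a generic multiple of an injective function to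
separate the points. -/
theorem exists_differentiable_injective_add_comp [ProperSpace E] {w : ℕ → E}
    (hw : ∀ R, {j | ‖w j‖ ≤ R}.Finite) {β : ℕ → ℂ}
    (hinj : ∀ i j, w i = w j → β i = β j → i = j) {B : E → ℝ}
    (hB : ∀ j, ‖β j‖ ≤ B (w j)) :
    ∃ f : E → ℂ, Differentiable ℂ f ∧ Function.Injective (fun j => β j + f (w j)) ∧
      ∀ R, {j | ‖β j + f (w j)‖ ≤ R}.Finite := by
  obtain ⟨enc, henc⟩ := countable_iff_exists_injOn.1 (countable_range w)
  obtain ⟨f₀, hf₀, hf₀w⟩ := exists_differentiable_eq_comp hw fun y => ((B y + ‖y‖ : ℝ) : ℂ)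
  obtain ⟨f₁, hf₁, hf₁w⟩ := exists_differentiable_eq_comp hw fun y => ((enc y + 1 : ℕ) : ℂ)⁻¹
  obtain ⟨t, ht⟩ := exists_injective_add_mul (x := fun j => β j + f₀ (w j))
    (κ := fun j => f₁ (w j)) fun i j hx hκ => by
      have hw' : w i = w j := by
        simp only [hf₁w, inv_inj, Nat.cast_inj, Nat.add_right_cancel_iff] at hκ
        exact henc (mem_range_self i) (mem_range_self j) hκ
      exact hinj i j hw' (by simpa [hw'] using hx)
  refine ⟨fun y => f₀ y + t * f₁ y, hf₀.add (hf₁.const_mul t), by simpa only [add_assoc] using ht,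
    fun R => (hw (R + ‖t‖)).subset fun j hj => ?_⟩
  have hf₀n : ‖f₀ (w j)‖ = B (w j) + ‖w j‖ := by
    rw [hf₀w, Complex.norm_real, Real.norm_of_nonneg]
    linarith [norm_nonneg (β j), hB j, norm_nonneg (w j)]
  have hf₁n : ‖t * f₁ (w j)‖ ≤ ‖t‖ := by
    rw [norm_mul, hf₁w, norm_inv, Complex.norm_natCast]
    exact mul_le_of_le_one_right (norm_nonneg t)
      (inv_le_one_of_one_le₀ (by exact_mod_cast Nat.le_add_left 1 _))
  have htri : ‖f₀ (w j)‖ ≤ ‖β j + (f₀ (w j) + t * f₁ (w j))‖ + ‖β j‖ + ‖t * f₁ (w j)‖ := by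
    calc ‖f₀ (w j)‖ = ‖β j + (f₀ (w j) + t * f₁ (w j)) - β j - t * f₁ (w j)‖ := by ring_nf
      _ ≤ _ := norm_sub_le_of_le (norm_sub_le _ _) le_rfl
  simp only [mem_ofPred_eq] at hj ⊢
  linarith [hB j]

end Holomorphic

theorem IsAutomorphism.comp {N : ℕ} {Φ Ψ : (Fin N → ℂ) → (Fin N → ℂ)} (hΦ : IsAutomorphism Φ)
    (hΨ : IsAutomorphism Ψ) : IsAutomorphism (Φ ∘ Ψ) := by
  obtain ⟨hΦd, Φ', hΦ'd, hΦl, hΦr⟩ := hΦ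
  obtain ⟨hΨd, Ψ', hΨ'd, hΨl, hΨr⟩ := hΨ
  exact ⟨hΦd.comp hΨd, Ψ' ∘ Φ', hΨ'd.comp hΦ'd, fun z => by simp [hΦl, hΨl],
    fun z => by simp [hΦr, hΨr]⟩

theorem Tame.of_comp {N : ℕ} {Ψ : (Fin N → ℂ) → (Fin N → ℂ)} (hΨ : IsAutomorphism Ψ)
    {a : ℕ → Fin N → ℂ} (h : Tame (Ψ ∘ a)) : Tame a :=
  let ⟨Φ, hΦ, hΦa⟩ := h
  ⟨Φ ∘ Ψ, hΦ.comp hΨ, hΦa⟩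

section Shears

variable {m : ℕ}

def headShear (f : (Fin m → ℂ) → ℂ) (z : Fin (m + 1) → ℂ) : Fin (m + 1) → ℂ :=
  Fin.cons (z 0 + f (Fin.tail z)) (Fin.tail z)

def tailShear (g : ℂ → Fin m → ℂ) (z : Fin (m + 1) → ℂ) : Fin (m + 1) → ℂ :=
  Fin.cons (z 0) (Fin.tail z + g (z 0))

@[simp]
theorem headShear_cons (f : (Fin m → ℂ) → ℂ) (x : ℂ) (y : Fin m → ℂ) :
    headShear f (Fin.cons x y) = Fin.cons (x + f y) y := by
  simp [headShear]

@[simp]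
theorem tailShear_cons (g : ℂ → Fin m → ℂ) (x : ℂ) (y : Fin m → ℂ) :
    tailShear g (Fin.cons x y) = Fin.cons x (y + g x) := by
  simp [tailShear]

theorem tailShear_tailShear_neg (g : ℂ → Fin m → ℂ) (z : Fin (m + 1) → ℂ) :
    tailShear g (tailShear (-g) z) = z :=
  Fin.consCases (fun x y => by simp) z

theorem differentiable_finTail : Differentiable ℂ fun z : Fin (m + 1) → ℂ => Fin.tail z :=
  differentiable_pi.2 fun i => differentiable_apply i.succ

theorem differentiable_headShear {f : (Fin m → ℂ) → ℂ} (hf : Differentiable ℂ f) :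
    Differentiable ℂ (headShear f) :=
  ((differentiable_apply 0).add (hf.comp differentiable_finTail)).finCons differentiable_finTail

theorem differentiable_tailShear {g : ℂ → Fin m → ℂ} (hg : Differentiable ℂ g) :
    Differentiable ℂ (tailShear g) :=
  (differentiable_apply 0).finCons
    (differentiable_finTail.add (hg.comp (differentiable_apply 0)))

theorem isAutomorphism_headShear {f : (Fin m → ℂ) → ℂ} (hf : Differentiable ℂ f) :
    IsAutomorphism (headShear f) :=
  ⟨differentiable_headShear hf, headShear (-f), differentiable_headShear hf.neg,
    Fin.consCases fun x y => by simp, Fin.consCases fun x y => by simp⟩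

theorem isAutomorphism_tailShear {g : ℂ → Fin m → ℂ} (hg : Differentiable ℂ g) :
    IsAutomorphism (tailShear g) :=
  ⟨differentiable_tailShear hg, tailShear (-g), differentiable_tailShear hg.neg,
    Fin.consCases fun x y => by simp, Fin.consCases fun x y => by simp⟩

theorem finCons_zero_eq_ite (x : ℂ) :
    (Fin.cons x 0 : Fin (m + 1) → ℂ) = fun i : Fin (m + 1) => if (i : ℕ) = 0 then x else 0 :=
  funext fun i => Fin.cases (by simp) (fun k => by simp) i

theorem norm_le_max_head_tail (z : Fin (m + 1) → ℂ) : ‖z‖ ≤ max ‖z 0‖ ‖Fin.tail z‖ :=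
  (pi_norm_le_iff_of_nonneg (by positivity)).2 fun i => Fin.cases (le_max_left _ _)
    (fun k => (norm_le_pi_norm (Fin.tail z) k).trans (le_max_right _ _)) i

/-- Three shears, built by interpolation in one variable, move `b j = (βⱼ, wⱼ)` along
`(βⱼ, wⱼ) ↦ (βⱼ, j e₀) ↦ (j, j e₀) ↦ (j, 0)`. -/
theorem tame_of_injective_head (hm : 0 < m) {b : ℕ → Fin (m + 1) → ℂ}
    (hinj : Function.Injective fun j => b j 0) (hdisc : ∀ R, {j | ‖b j 0‖ ≤ R}.Finite) :
    Tame b := by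
  let i₀ : Fin m := ⟨0, hm⟩
  obtain ⟨g, hg, hgb⟩ := exists_differentiable_interpolation hinj hdisc
    fun j => (j : ℂ) • Pi.single i₀ 1 - Fin.tail (b j)
  have hnat : ∀ R, {j : ℕ | ‖(j : ℂ)‖ ≤ R}.Finite := fun R =>
    (finite_Iic ⌈R⌉₊).subset fun j hj => by
      simp only [mem_ofPred_eq, Complex.norm_natCast] at hj
      exact Nat.cast_le.1 (hj.trans (Nat.le_ceil R))
  obtain ⟨u, hu, hub⟩ := exists_differentiable_interpolation Nat.cast_injective hnat
    fun j => (j : ℂ) - b j 0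
  have hu' : Differentiable ℂ fun y : Fin m → ℂ => u (y i₀) := hu.comp (differentiable_apply i₀)
  have hsingle : Differentiable ℂ fun s : ℂ => -(s • Pi.single i₀ 1 : Fin m → ℂ) :=
    (differentiable_id.smul_const _).neg
  refine ⟨tailShear (fun s => -(s • Pi.single i₀ 1)) ∘ headShear (fun y => u (y i₀)) ∘ tailShear g,
    (isAutomorphism_tailShear hsingle).comp
      ((isAutomorphism_headShear hu').comp (isAutomorphism_tailShear hg)), fun j => ?_⟩
  rw [← finCons_zero_eq_ite, ← Fin.cons_self_tail (b j)]
  simp [-Fin.cons_self_tail, hgb, hub]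

theorem tame_of_norm_head_le (hm : 0 < m) {b : ℕ → Fin (m + 1) → ℂ}
    (hinj : Function.Injective b) (hdisc : ∀ R, {j | ‖Fin.tail (b j)‖ ≤ R}.Finite)
    {B : (Fin m → ℂ) → ℝ} (hB : ∀ j, ‖b j 0‖ ≤ B (Fin.tail (b j))) : Tame b := by
  obtain ⟨f, hf, hfinj, hfdisc⟩ := exists_differentiable_injective_add_comp hdisc
    (fun i j hw h0 => hinj (by rw [← Fin.cons_self_tail (b i), ← Fin.cons_self_tail (b j), hw, h0]))
    hB
  exact Tame.of_comp (isAutomorphism_headShear hf) (tame_of_injective_head hm hfinj hfdisc)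

end Shears

theorem eq_of_sum_mul_pow_eq {M n : ℕ} {α β : Fin n → ℕ} (hα : ∀ i, α i < M) (hβ : ∀ i, β i < M)
    (h : ∑ i, α i * M ^ (i : ℕ) = ∑ i, β i * M ^ (i : ℕ)) : α = β := by
  have : (fun i => (⟨α i, hα i⟩ : Fin M)) = fun i => ⟨β i, hβ i⟩ :=
    finFunctionFinEquiv.injective (Fin.ext (by simpa [finFunctionFinEquiv_apply] using h))
  exact funext fun i => congrArg Fin.val (congrFun this i)

section NagataShear

open MvPolynomial

variable {k : Type*} [Field k] {m : ℕ}

noncomputable def nagataSubst (M : ℕ) : Fin (m + 1) → MvPolynomial (Fin (m + 1)) k :=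
  Fin.cons (X 0) fun j => X j.succ + X 0 ^ M ^ ((j : ℕ) + 1)

theorem monic_and_natDegree_finSuccEquiv_nagataSubst {M : ℕ} (hM : 0 < M) (i : Fin (m + 1)) :
    (finSuccEquiv k m (nagataSubst M i)).Monic ∧
      (finSuccEquiv k m (nagataSubst M i)).natDegree = M ^ (i : ℕ) := by
  refine Fin.cases ?_ (fun j => ?_) i
  · simp [nagataSubst, finSuccEquiv_X_zero]
  · have h : finSuccEquiv k m (nagataSubst M j.succ) =
        Polynomial.X ^ M ^ ((j : ℕ) + 1) + Polynomial.C (X j) := by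
      simp [nagataSubst, finSuccEquiv_X_succ, finSuccEquiv_X_zero, add_comm]
    rw [h]
    exact ⟨Polynomial.monic_X_pow_add_C _ (pow_pos hM _).ne', Polynomial.natDegree_X_pow_add_C⟩

theorem finSuccEquiv_bind₁_nagataSubst_monomial (M : ℕ) (α : Fin (m + 1) →₀ ℕ) (c : k) :
    finSuccEquiv k m (bind₁ (nagataSubst M) (monomial α c)) =
      Polynomial.C (C c) * ∏ i, finSuccEquiv k m (nagataSubst M i) ^ α i := by
  rw [bind₁_monomial, map_mul, map_prod, Finset.prod_subset (Finset.subset_univ α.support)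
    fun i _ hi => by rw [Finsupp.notMem_support_iff.1 hi, pow_zero, map_one]]
  simp [finSuccEquiv_apply]

/-- Nagata's trick: with `M` larger than every exponent of `q`, distinct monomials of `q` become
monic polynomials in `X 0` of distinct degrees `∑ i, α i * M ^ i` (base `M` digits), so the
leading coefficient is the coefficient of a single monomial of `q`. -/
theorem isUnit_leadingCoeff_finSuccEquiv_bind₁_nagataSubst {q : MvPolynomial (Fin (m + 1)) k}
    (hq : q ≠ 0) :
    IsUnit (finSuccEquiv k m (bind₁ (nagataSubst (q.totalDegree + 1)) q)).leadingCoeff := by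
  set M := q.totalDegree + 1
  set P := finSuccEquiv k m (bind₁ (nagataSubst M) q)
  let T : (Fin (m + 1) →₀ ℕ) → Polynomial (MvPolynomial (Fin m) k) :=
    fun α => ∏ i, finSuccEquiv k m (nagataSubst M i) ^ α i
  let e : (Fin (m + 1) →₀ ℕ) → ℕ := fun α => ∑ i, α i * M ^ (i : ℕ)
  have hmon := monic_and_natDegree_finSuccEquiv_nagataSubst (k := k) (m := m) (Nat.succ_pos q.totalDegree)
  have hT : ∀ α, (T α).Monic ∧ (T α).natDegree = e α := fun α => by
    refine ⟨Polynomial.monic_prod_of_monic _ _ fun i _ => (hmon i).1.pow _, ?_⟩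
    rw [Polynomial.natDegree_prod_of_monic _ _ fun i _ => (hmon i).1.pow _]
    exact Finset.sum_congr rfl fun i _ => by rw [(hmon i).1.natDegree_pow, (hmon i).2]
  have hP : P = ∑ α ∈ q.support, Polynomial.C (C (coeff α q)) * T α := by
    simp only [P]
    conv_lhs => rw [← q.support_sum_monomial_coeff]
    simp only [map_sum, finSuccEquiv_bind₁_nagataSubst_monomial]
    rfl
  have he : Set.InjOn e q.support := fun α hα β hβ h => by
    have hlt : ∀ γ ∈ q.support, ∀ i, γ i < M := fun γ hγ i =>
      Nat.lt_succ_of_le ((monomial_le_degreeOf i hγ).trans (degreeOf_le_totalDegree q i))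
    exact DFunLike.coe_injective (eq_of_sum_mul_pow_eq (hlt α hα) (hlt β hβ) h)
  obtain ⟨α₀, hα₀, hmax⟩ := q.support.exists_max_image e (support_nonempty.2 hq)
  have hcoeff : ∀ n, e α₀ ≤ n → P.coeff n = if n = e α₀ then C (coeff α₀ q) else 0 := by
    intro n hn
    rw [hP, Polynomial.finsetSum_coeff, Finset.sum_eq_single α₀]
    · rw [Polynomial.coeff_C_mul]
      split_ifs with h
      · rw [h, ← (hT α₀).2, (hT α₀).1.coeff_natDegree, mul_one]
      · rw [Polynomial.coeff_eq_zero_of_natDegree_lt (by rw [(hT α₀).2]; omega), mul_zero]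
    · intro β hβ hne
      rw [Polynomial.coeff_C_mul, Polynomial.coeff_eq_zero_of_natDegree_lt, mul_zero]
      rw [(hT β).2]
      exact (lt_of_le_of_ne (hmax β hβ) fun h => hne (he hβ hα₀ h)).trans_le hn
    · exact fun h => absurd hα₀ h
  have hc : C (coeff α₀ q) ≠ (0 : MvPolynomial (Fin m) k) :=
    C_ne_zero.2 (mem_support_iff.1 hα₀)
  have hdeg : P.natDegree = e α₀ := Polynomial.natDegree_eq_of_le_of_coeff_ne_zero
    (Polynomial.natDegree_le_iff_coeff_eq_zero.2 fun n hn => by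
      rw [hcoeff n hn.le, if_neg hn.ne'])
    (by rwa [hcoeff _ le_rfl, if_pos rfl])
  rw [Polynomial.leadingCoeff, hdeg, hcoeff _ le_rfl, if_pos rfl]
  exact (isUnit_iff_ne_zero.2 (mem_support_iff.1 hα₀)).map C

end NagataShear

theorem exists_norm_le_of_isRoot_map_eval {σ : Type*} {P : Polynomial (MvPolynomial σ ℂ)}
    (hP : IsUnit P.leadingCoeff) {K : Set (σ → ℂ)} (hK : IsCompact K) :
    ∃ C, ∀ y ∈ K, ∀ x : ℂ, (P.map (MvPolynomial.eval y)).IsRoot x → ‖x‖ ≤ C := by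
  obtain ⟨c, hc, hPc⟩ := MvPolynomial.isUnit_iff_eq_C_of_isReduced.1 hP
  obtain ⟨S, hS⟩ := hK.exists_bound_of_continuousOn (f := fun y =>
    ∑ i ∈ Finset.range P.natDegree, ‖MvPolynomial.eval y (P.coeff i)‖)
    (continuous_finsetSum _ fun i _ => (MvPolynomial.continuous_eval _).norm).continuousOn
  refine ⟨S / ‖c‖ + 1, fun y hy x hx => ?_⟩
  have hlc : MvPolynomial.eval y P.leadingCoeff = c := by rw [hPc, MvPolynomial.eval_C]
  have hne : MvPolynomial.eval y P.leadingCoeff ≠ 0 := hlc ▸ hc.ne_zero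
  have hmap : (P.map (MvPolynomial.eval y)).leadingCoeff = c := by
    rw [Polynomial.leadingCoeff_map_of_leadingCoeff_ne_zero _ hne, hlc]
  have hx' := hx.norm_lt_cauchyBound fun h => hc.ne_zero (by simpa [h] using hmap.symm)
  rw [Polynomial.cauchyBound, hmap,
    Polynomial.natDegree_map_of_leadingCoeff_ne_zero _ hne] at hx'
  have hsup : (((Finset.range P.natDegree).sup fun i =>
      ‖(P.map (MvPolynomial.eval y)).coeff i‖₊ : NNReal) : ℝ) ≤ S := by
    refine le_trans ?_ ((le_abs_self _).trans (hS y hy))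
    have := Finset.sup_le (s := Finset.range P.natDegree)
      (f := fun i => ‖(P.map (MvPolynomial.eval y)).coeff i‖₊)
      fun i hi => Finset.single_le_sum
        (f := fun j => ‖(P.map (MvPolynomial.eval y)).coeff j‖₊) (fun j _ => zero_le) hi
    simpa [Polynomial.coeff_map] using NNReal.coe_le_coe.2 this
  calc ‖x‖ ≤ _ := (NNReal.coe_lt_coe.2 hx').le
    _ ≤ S / ‖c‖ + 1 := by
      push_cast
      gcongr

theorem exists_differentiable_tailShear_norm_le {m : ℕ} {q : MvPolynomial (Fin (m + 1)) ℂ}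
    (hq : q ≠ 0) :
    ∃ g : ℂ → Fin m → ℂ, Differentiable ℂ g ∧ ∀ R, ∃ C, ∀ z,
      MvPolynomial.eval (tailShear g z) q = 0 → ‖Fin.tail z‖ ≤ R → ‖z 0‖ ≤ C := by
  set M := q.totalDegree + 1
  refine ⟨fun s j => s ^ M ^ ((j : ℕ) + 1), differentiable_pi.2 fun j => differentiable_pow _,
    fun R => ?_⟩
  obtain ⟨C, hC⟩ := exists_norm_le_of_isRoot_map_eval
    (isUnit_leadingCoeff_finSuccEquiv_bind₁_nagataSubst hq) (isCompact_closedBall 0 R)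
  refine ⟨C, fun z hz hR => hC _ (mem_closedBall_zero_iff.2 hR) _ ?_⟩
  have hsubst : (fun i => MvPolynomial.eval z (nagataSubst M i)) =
      tailShear (fun s j => s ^ M ^ ((j : ℕ) + 1)) z :=
    funext fun i => Fin.cases (by simp [nagataSubst, tailShear])
      (fun j => by simp [nagataSubst, tailShear, Fin.tail]) i
  rw [Polynomial.IsRoot, ← MvPolynomial.eval_eq_eval_mv_eval', Fin.cons_self_tail, ← hz, ← hsubst]
  exact MvPolynomial.eval₂Hom_bind₁ _ _ _ _

/-- A discrete sequence contained in a proper algebraic subvariety of ℂ^N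
is tame. -/
theorem stmt_11 {N : ℕ} (hN : 1 < N)
    (a : ℕ → (Fin N → ℂ)) (ha : DiscreteSeq a)
    (S : Set (MvPolynomial (Fin N) ℂ))
    (hproper : {z : Fin N → ℂ | ∀ p ∈ S, MvPolynomial.eval z p = 0} ≠ Set.univ)
    (haS : ∀ j, ∀ p ∈ S, MvPolynomial.eval (a j) p = 0) :
    Tame a := by
  obtain ⟨m, rfl⟩ : ∃ m, N = m + 1 := ⟨N - 1, by omega⟩
  obtain ⟨q, hqS, hq⟩ : ∃ q ∈ S, q ≠ 0 := by
    obtain ⟨z, hz⟩ := ne_univ_iff_exists_notMem _ |>.1 hproper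
    simp only [mem_ofPred_eq, not_forall] at hz
    obtain ⟨q, hqS, hqz⟩ := hz
    exact ⟨q, hqS, fun h => hqz (by simp [h])⟩
  obtain ⟨g, hg, hbound⟩ := exists_differentiable_tailShear_norm_le hq
  choose C hC using hbound
  -- In the coordinates of `b`, `q` has a constant leading coefficient in the first variable.
  set b := fun j => tailShear (-g) (a j)
  have hab : ∀ j, tailShear g (b j) = a j := fun j => tailShear_tailShear_neg g (a j)
  have hroot : ∀ j, MvPolynomial.eval (tailShear g (b j)) q = 0 := fun j => by
    rw [hab]; exact haS j q hqS
  have hbdisc : ∀ R, {j | ‖b j‖ ≤ R}.Finite := fun R =>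
    (ha.2 _ ((isCompact_closedBall 0 R).image (differentiable_tailShear hg).continuous)).subset
      fun j hj => ⟨b j, mem_closedBall_zero_iff.2 hj, hab j⟩
  refine Tame.of_comp (isAutomorphism_tailShear hg.neg) (tame_of_norm_head_le (by omega)
    (fun i j h => ha.1 (by rw [← hab i, ← hab j]; exact congrArg _ h))
    (fun R => (hbdisc (max (C R) R)).subset fun j hj => ?_)
    (B := fun y => C ‖y‖) fun j => hC _ _ (hroot j) le_rfl)
  exact (norm_le_max_head_tail _).trans (max_le_max (hC R _ (hroot j) hj) hj)
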